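/- Let p be an odd prime and n ≥ 1 an integer. If p divides n then |𝔰(p,n)| ≤ 3p²/(p−1)³, and if p does not divide n then |𝔰(p,n)| ≤ (p²/(p−1)³) · (1 + 7/p). -/

import Mathlib

/-- `e_q(x) = exp(2πix/q)` evaluated at the integer `x = a·h²`, summed over a reduced
residue system: `S_q(a) = ∑_{1 ≤ h ≤ q, gcd(h,q)=1} e_q(a h²)`. -/
noncomputable def Sq (q : ℕ) (a : ℤ) : ℂ :=
  ∑ h ∈ (Finset.Icc 1 q).filter (fun h => Nat.gcd h q = 1),
    Complex.exp (2 * (Real.pi : ℂ) * Complex.I * ((a : ℂ) * (h : ℂ) ^ 2) / (q : ℂ))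

/-- The singular series coefficient
`𝔰(q,n) = φ(q)⁻³ ∑_{1 ≤ a ≤ q, gcd(a,q)=1} S_q(a)³ e_q(−an)`. -/
noncomputable def sfrak (q : ℕ) (n : ℤ) : ℂ :=
  ((q.totient : ℂ)) ⁻¹ ^ 3 *
    ∑ a ∈ (Finset.Icc 1 q).filter (fun a => Nat.gcd a q = 1),
      (Sq q a) ^ 3 *
        Complex.exp (-(2 * (Real.pi : ℂ) * Complex.I * ((a : ℂ) * (n : ℂ)) / (q : ℂ)))


/-!
For `b ≠ 0`, counting the solutions of `x² = t` with the quadratic character `χ` gives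
`S(b) = ∑_{x ≠ 0} e_p(b x²) = χ(b) g - 1`, where `g` is the quadratic Gauss sum. As `χ(b)² = 1`,
`S(b)³ = χ(b)(g³ + 3g) - (3g² + 1)`, and the sums of `χ(b) e_p(-bn)` and of `e_p(-bn)` over
`b ≠ 0` are `χ(-n) g` and `p [p ∣ n] - 1`. With `g² = χ(-1) p` this yields the closed form
`(p - 1)³ 𝔰(p, n) = χ(-n) p (p + 3χ(-1)) - (1 + 3pχ(-1)) (p [p ∣ n] - 1)`,
and the bounds follow from `|χ| ≤ 1`.
-/

open Finset

theorem norm_natCast_sub_one {q : ℕ} (hq : 1 ≤ q) : ‖(q : ℂ) - 1‖ = q - 1 := by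
  rw [← Nat.cast_pred hq, Complex.norm_natCast, Nat.cast_pred hq]

theorem norm_natCast_add_mul_le {ε : ℂ} (hε : ‖ε‖ ≤ 1) (a b : ℕ) :
    ‖(a : ℂ) + b * ε‖ ≤ a + b :=
  calc ‖(a : ℂ) + b * ε‖ ≤ a + b * ‖ε‖ := by
        simpa using norm_add_le (a : ℂ) (b * ε)
    _ ≤ a + b := by gcongr; exact mul_le_of_le_one_right b.cast_nonneg hε

theorem MulChar.IsQuadratic.norm_apply_le_one {R : Type*} [CommMonoid R] {χ : MulChar R ℂ}
    (hχ : χ.IsQuadratic) (a : R) : ‖χ a‖ ≤ 1 := by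
  rcases hχ a with h | h | h <;> simp [h]

theorem MulChar.IsQuadratic.gaussSum_mulShift {F R : Type*} [Field F] [Fintype F] [CommRing R]
    [IsDomain R] {χ : MulChar F R} (hχ : χ.IsQuadratic) (hχ₁ : χ ≠ 1) (ψ : AddChar F R)
    (a : F) :
    gaussSum χ (ψ.mulShift a) = χ a * gaussSum χ ψ := by
  rcases eq_or_ne a 0 with rfl | ha
  · rw [AddChar.mulShift_zero, gaussSum_one_right hχ₁, MulChar.map_zero, zero_mul]
  · simpa only [hχ.inv, Units.val_mk0] using gaussSum_mulShift_eq χ ψ (Units.mk0 a ha)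

section FiniteField

variable {F : Type*} [Field F] [Fintype F] [DecidableEq F]

noncomputable def complexQuadraticChar (F : Type*) [Field F] [Fintype F] [DecidableEq F] :
    MulChar F ℂ :=
  (quadraticChar F).ringHomComp (Int.castRingHom ℂ)

theorem complexQuadraticChar_apply (a : F) :
    complexQuadraticChar F a = (quadraticChar F a : ℂ) :=
  rfl

theorem complexQuadraticChar_isQuadratic : (complexQuadraticChar F).IsQuadratic :=
  (quadraticChar_isQuadratic F).comp _

theorem complexQuadraticChar_ne_one (hF : ringChar F ≠ 2) : complexQuadraticChar F ≠ 1 :=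
  (MulChar.ringHomComp_ne_one_iff (Int.castRingHom ℂ).injective_int).mpr (quadraticChar_ne_one hF)

theorem complexQuadraticChar_sq {a : F} (ha : a ≠ 0) : complexQuadraticChar F a ^ 2 = 1 := by
  rw [complexQuadraticChar_apply]
  exact_mod_cast quadraticChar_sq_one ha

theorem sum_comp_sq (hF : ringChar F ≠ 2) (f : F → ℂ) :
    ∑ x, f (x ^ 2) = ∑ t, (complexQuadraticChar F t + 1) * f t := by
  rw [← sum_fiberwise univ (· ^ 2) (fun x => f (x ^ 2))]
  refine sum_congr rfl fun t _ => ?_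
  have hsqrts := quadraticChar_card_sqrts hF t
  rw [Set.toFinset_ofPred] at hsqrts
  rw [sum_congr rfl fun x hx => by rw [(mem_filter.mp hx).2], sum_const, nsmul_eq_mul,
    complexQuadraticChar_apply]
  exact_mod_cast congrArg (fun k : ℤ => (k : ℂ) * f t) hsqrts

variable {ψ : AddChar F ℂ}

-- For `F = ZMod p` and `ψ = e_p` these are `S_p(b)` and `φ(p)³ 𝔰(p, m)`.
noncomputable def reducedQuadraticSum (ψ : AddChar F ℂ) (b : F) : ℂ :=
  ∑ x ∈ univ.erase 0, ψ (b * x ^ 2)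

noncomputable def singularSum (ψ : AddChar F ℂ) (m : F) : ℂ :=
  ∑ b ∈ univ.erase 0, reducedQuadraticSum ψ b ^ 3 * ψ (-(b * m))

theorem sum_addChar_mul_sq (hF : ringChar F ≠ 2) (hψ : ψ.IsPrimitive) {b : F} (hb : b ≠ 0) :
    ∑ x, ψ (b * x ^ 2) = complexQuadraticChar F b * gaussSum (complexQuadraticChar F) ψ := by
  rw [sum_comp_sq hF (fun t => ψ (b * t)), ← complexQuadraticChar_isQuadratic.gaussSum_mulShift
    (complexQuadraticChar_ne_one hF)]
  have hvanish : ∑ t, ψ (b * t) = 0 := by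
    simpa [mul_comm, hb] using AddChar.sum_mulShift b hψ
  simp only [add_mul, one_mul, sum_add_distrib, hvanish, add_zero, gaussSum,
    AddChar.mulShift_apply]

theorem reducedQuadraticSum_eq (hF : ringChar F ≠ 2) (hψ : ψ.IsPrimitive) {b : F}
    (hb : b ≠ 0) :
    reducedQuadraticSum ψ b =
      complexQuadraticChar F b * gaussSum (complexQuadraticChar F) ψ - 1 := by
  rw [reducedQuadraticSum, sum_erase_eq_sub (mem_univ 0), sum_addChar_mul_sq hF hψ hb]
  simp

theorem reducedQuadraticSum_pow_three (hF : ringChar F ≠ 2) (hψ : ψ.IsPrimitive) {b : F}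
    (hb : b ≠ 0) :
    reducedQuadraticSum ψ b ^ 3 =
      complexQuadraticChar F b * (gaussSum (complexQuadraticChar F) ψ ^ 3
        + 3 * gaussSum (complexQuadraticChar F) ψ)
        - (3 * gaussSum (complexQuadraticChar F) ψ ^ 2 + 1) := by
  rw [reducedQuadraticSum_eq hF hψ hb]
  linear_combination (complexQuadraticChar F b * gaussSum (complexQuadraticChar F) ψ ^ 3
    - 3 * gaussSum (complexQuadraticChar F) ψ ^ 2) * complexQuadraticChar_sq hb

theorem sum_erase_zero_complexQuadraticChar_mul (hF : ringChar F ≠ 2) (m : F) :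
    ∑ b ∈ univ.erase 0, complexQuadraticChar F b * ψ (-(b * m)) =
      complexQuadraticChar F (-m) * gaussSum (complexQuadraticChar F) ψ := by
  rw [sum_erase _ (by rw [MulChar.map_zero, zero_mul]),
    ← complexQuadraticChar_isQuadratic.gaussSum_mulShift (complexQuadraticChar_ne_one hF)]
  simp only [gaussSum, AddChar.mulShift_apply]
  exact sum_congr rfl fun b _ => by ring_nf

theorem sum_erase_zero_addChar (hψ : ψ.IsPrimitive) (m : F) :
    ∑ b ∈ univ.erase 0, ψ (-(b * m)) = (if m = 0 then (Fintype.card F : ℂ) else 0) - 1 := by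
  rw [sum_erase_eq_sub (mem_univ 0)]
  simp only [← mul_neg, AddChar.sum_mulShift _ hψ, neg_eq_zero, zero_mul, neg_zero,
    AddChar.map_zero_eq_one, Nat.cast_ite, Nat.cast_zero]

theorem singularSum_eq (hF : ringChar F ≠ 2) (hψ : ψ.IsPrimitive) (m : F) :
    singularSum ψ m =
      complexQuadraticChar F (-m) *
          (Fintype.card F * (Fintype.card F + 3 * complexQuadraticChar F (-1)))
        - (1 + 3 * Fintype.card F * complexQuadraticChar F (-1)) *
          ((if m = 0 then (Fintype.card F : ℂ) else 0) - 1) := by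
  set χ := complexQuadraticChar F
  set g := gaussSum χ ψ
  have hcube : ∀ b ∈ univ.erase 0, reducedQuadraticSum ψ b ^ 3 * ψ (-(b * m)) =
      (g ^ 3 + 3 * g) * (χ b * ψ (-(b * m))) - (3 * g ^ 2 + 1) * ψ (-(b * m)) := by
    intro b hb
    rw [reducedQuadraticSum_pow_three hF hψ (ne_of_mem_erase hb)]
    ring
  rw [singularSum, sum_congr rfl hcube, sum_sub_distrib, ← mul_sum, ← mul_sum,
    sum_erase_zero_complexQuadraticChar_mul hF, sum_erase_zero_addChar hψ]
  set U := (if m = 0 then (Fintype.card F : ℂ) else 0) - 1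
  have hg : g ^ 2 = χ (-1) * Fintype.card F :=
    gaussSum_sq (complexQuadraticChar_ne_one hF) complexQuadraticChar_isQuadratic hψ
  have hε : χ (-1) ^ 2 = 1 := complexQuadraticChar_sq (neg_ne_zero.mpr one_ne_zero)
  linear_combination (χ (-m) * (g ^ 2 + χ (-1) * Fintype.card F) + 3 * χ (-m) - 3 * U) * hg
    + χ (-m) * (Fintype.card F : ℂ) ^ 2 * hε

theorem norm_singularSum_zero_le (hF : ringChar F ≠ 2) (hψ : ψ.IsPrimitive) :
    ‖singularSum ψ 0‖ ≤ (1 + 3 * Fintype.card F) * (Fintype.card F - 1) := by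
  have h := norm_natCast_add_mul_le
    (complexQuadraticChar_isQuadratic.norm_apply_le_one (-1 : F)) 1 (3 * Fintype.card F)
  push_cast at h
  rw [singularSum_eq hF hψ, if_pos rfl, neg_zero, MulChar.map_zero, zero_mul, zero_sub, norm_neg,
    norm_mul, norm_natCast_sub_one Fintype.card_pos]
  gcongr
  exact sub_nonneg.mpr (Nat.one_le_cast.mpr Fintype.card_pos)

theorem norm_singularSum_le (hF : ringChar F ≠ 2) (hψ : ψ.IsPrimitive) {m : F} (hm : m ≠ 0) :
    ‖singularSum ψ m‖ ≤ (Fintype.card F : ℝ) ^ 2 + 6 * Fintype.card F + 1 := by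
  have hε := complexQuadraticChar_isQuadratic.norm_apply_le_one (-1 : F)
  have hχ := complexQuadraticChar_isQuadratic.norm_apply_le_one (-m)
  have h1 := norm_natCast_add_mul_le hε (Fintype.card F) 3
  have h2 := norm_natCast_add_mul_le hε 1 (3 * Fintype.card F)
  push_cast at h1 h2
  rw [singularSum_eq hF hψ, if_neg hm, zero_sub, mul_neg_one, sub_neg_eq_add]
  calc _ ≤ 1 * ((Fintype.card F : ℝ) * (Fintype.card F + 3)) + (1 + 3 * Fintype.card F) := by
        refine (norm_add_le _ _).trans (add_le_add ?_ h2)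
        rw [norm_mul, norm_mul, Complex.norm_natCast]
        gcongr
    _ = _ := by ring

end FiniteField

section ZMod

variable {p : ℕ} [Fact p.Prime]

theorem filter_gcd_eq_one_Icc_eq_Ico : (Icc 1 p).filter (fun h => Nat.gcd h p = 1) = Ico 1 p := by
  have hp : p.Prime := Fact.out
  ext h
  simp only [mem_filter, mem_Icc, mem_Ico, ← Nat.coprime_iff_gcd_eq_one, Nat.coprime_comm,
    hp.coprime_iff_not_dvd]
  constructor
  · rintro ⟨⟨h1, h2⟩, hndvd⟩
    exact ⟨h1, lt_of_le_of_ne h2 (by rintro rfl; exact hndvd dvd_rfl)⟩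
  · rintro ⟨h1, h2⟩
    exact ⟨⟨h1, h2.le⟩, fun hd => absurd (Nat.le_of_dvd h1 hd) (by omega)⟩

theorem sum_Icc_filter_coprime_eq_sum_erase_zero {M : Type*} [AddCommMonoid M] (f : ZMod p → M) :
    ∑ h ∈ (Icc 1 p).filter (fun h => Nat.gcd h p = 1), f h = ∑ x ∈ univ.erase 0, f x := by
  rw [filter_gcd_eq_one_Icc_eq_Ico]
  refine sum_nbij' (↑) ZMod.val (fun h hh => ?_) (fun x hx => ?_)
    (fun h hh => ZMod.val_cast_of_lt (mem_Ico.mp hh).2) (fun x _ => ZMod.natCast_zmod_val x)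
    (fun _ _ => rfl)
  · rw [mem_Ico] at hh
    rw [mem_erase, ne_eq, ZMod.natCast_eq_zero_iff]
    exact ⟨fun hd => absurd (Nat.le_of_dvd hh.1 hd) (by omega), mem_univ _⟩
  · rw [mem_erase] at hx
    exact mem_Ico.mpr
      ⟨Nat.one_le_iff_ne_zero.mpr ((ZMod.val_ne_zero x).mpr hx.1), ZMod.val_lt x⟩

theorem Sq_eq_reducedQuadraticSum (a : ℤ) :
    Sq p a = reducedQuadraticSum ZMod.stdAddChar (a : ZMod p) := by
  rw [Sq, reducedQuadraticSum, ← sum_Icc_filter_coprime_eq_sum_erase_zero]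
  refine sum_congr rfl fun h _ => ?_
  have he := ZMod.stdAddChar_coe (N := p) (a * h ^ 2)
  push_cast at he
  exact he.symm

theorem sfrak_eq_singularSum (n : ℤ) :
    sfrak p n = ((p : ℂ) - 1)⁻¹ ^ 3 * singularSum ZMod.stdAddChar (n : ZMod p) := by
  rw [sfrak, singularSum, Nat.totient_prime Fact.out, Nat.cast_pred (Fact.out : p.Prime).pos,
    ← sum_Icc_filter_coprime_eq_sum_erase_zero]
  refine congrArg _ (sum_congr rfl fun a _ => ?_)
  have he := ZMod.stdAddChar_coe (N := p) (-(a * n))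
  push_cast at he
  rw [mul_neg, neg_div] at he
  rw [Sq_eq_reducedQuadraticSum, Int.cast_natCast, he]

end ZMod

theorem sfrak_prime_bounds_general (p : ℕ) (hp : p.Prime) (hodd : Odd p) (n : ℕ) :
    ((p ∣ n → ‖sfrak p n‖ ≤ 3 * (p : ℝ) ^ 2 / ((p : ℝ) - 1) ^ 3) ∧
      (¬ p ∣ n → ‖sfrak p n‖ ≤
        (p : ℝ) ^ 2 / ((p : ℝ) - 1) ^ 3 * (1 + 7 / (p : ℝ)))) := by
  have : Fact p.Prime := ⟨hp⟩
  have hp2 : p ≠ 2 := by rintro rfl; exact Nat.not_odd_iff_even.mpr even_two hodd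
  have hF : ringChar (ZMod p) ≠ 2 := by rwa [ZMod.ringChar_zmod_n]
  have hψ := ZMod.isPrimitive_stdAddChar p
  have hp3 : (3 : ℝ) ≤ p := by exact_mod_cast (hp.two_le.lt_of_ne hp2.symm : 2 < p)
  have hden : 0 < ((p : ℝ) - 1) ^ 3 := pow_pos (by linarith) 3
  have hnorm :
      ‖sfrak p n‖ = ‖singularSum ZMod.stdAddChar (n : ZMod p)‖ / ((p : ℝ) - 1) ^ 3 := by
    rw [sfrak_eq_singularSum, Int.cast_natCast, norm_mul, norm_pow, norm_inv,
      norm_natCast_sub_one hp.one_le, inv_pow, inv_mul_eq_div]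
  rw [hnorm]
  constructor
  · intro hdvd
    have h := norm_singularSum_zero_le hF hψ
    rw [ZMod.card, ← (ZMod.natCast_eq_zero_iff n p).mpr hdvd] at h
    exact div_le_div_of_nonneg_right (by nlinarith) hden.le
  · intro hndvd
    have h := norm_singularSum_le hF hψ (mt (ZMod.natCast_eq_zero_iff n p).mp hndvd)
    rw [ZMod.card] at h
    rw [show (p : ℝ) ^ 2 / ((p : ℝ) - 1) ^ 3 * (1 + 7 / p) =
      ((p : ℝ) ^ 2 + 7 * p) / ((p : ℝ) - 1) ^ 3 by field_simp]
    exact div_le_div_of_nonneg_right (by nlinarith) hden.le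

/-- For an odd prime p and n ≥ 1: if p ∣ n then `|𝔰(p,n)| ≤ 3p²/(p−1)³`,
and if p ∤ n then `|𝔰(p,n)| ≤ (p²/(p−1)³)(1 + 7/p)`. -/
theorem sfrak_prime_bounds (p : ℕ) (hp : p.Prime) (hodd : Odd p) (n : ℕ) (hn : 1 ≤ n) :
    ((p ∣ n → ‖sfrak p n‖ ≤ 3 * (p : ℝ) ^ 2 / ((p : ℝ) - 1) ^ 3) ∧
      (¬ p ∣ n → ‖sfrak p n‖ ≤
        (p : ℝ) ^ 2 / ((p : ℝ) - 1) ^ 3 * (1 + 7 / (p : ℝ)))) :=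
  sfrak_prime_bounds_general p hp hodd n
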